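/- arXiv:2302.12904 — 2 statements merged into one kernel-verified Lean document; each statement's English description precedes it below -/
import Mathlib

section
/- Let E and F be Fréchet spaces and T : E → F a continuous linear injective operator whose adjoint T* : F* → E* is surjective. If (x_j) is a sequence in E such that T x_j → 0 in F, then x_j → 0 in E. -/
/-!
Let `U` be a closed absolutely convex neighbourhood of `0` in `E`. Its polar `U°` is compact for
pointwise convergence (Tychonoff), and by surjectivity of `T*` every element of `U°` is `μ ∘ T`
with `μ` in the polar of some member `V_n` of a countable neighbourhood basis of `0` in `F`. The
sets `T*(V_n°)` are compact, so by Baire's theorem one of them is a neighbourhood, relative to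
`U°`, of some point of `U°`; since `U°` is convex and bounded, this forces `U° ⊆ r • T*(V_n°)`
for some `r > 0`. Hence `|g x| ≤ 1` for all `g ∈ U°` as soon as `T x ∈ r⁻¹ • V_n`, and then
`x ∈ U` by the bipolar theorem.
-/

open Filter Topology Set Pointwise

theorem AbsConvex.linear_image {𝕜 E F : Type*} [NormedField 𝕜] [PartialOrder 𝕜]
    [AddCommGroup E] [Module 𝕜 E] [AddCommGroup F] [Module 𝕜 F] {s : Set E}
    (hs : AbsConvex 𝕜 s) (f : E →ₗ[𝕜] F) : AbsConvex 𝕜 (f '' s) :=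
  ⟨fun a ha => by
    rw [← image_smul_set]
    exact image_mono (hs.1 a ha), hs.2.linear_image f⟩

theorem IsCompact.exists_mem_nhdsWithin_of_subset_iUnion {X ι : Type*} [TopologicalSpace X]
    [T2Space X] [Countable ι] {A : Set X} (hA : IsCompact A) (hne : A.Nonempty)
    {K : ι → Set X} (hK : ∀ i, IsClosed (K i)) (hAK : A ⊆ ⋃ i, K i) :
    ∃ i, ∃ a ∈ A, K i ∈ 𝓝[A] a := by
  have : CompactSpace A := isCompact_iff_compactSpace.mp hA
  have : Nonempty A := hne.to_subtype
  obtain ⟨i, ⟨a, ha⟩⟩ := nonempty_interior_of_iUnion_of_closed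
    (fun i => (hK i).preimage continuous_subtype_val)
    (eq_univ_of_forall fun a => by simpa using hAK a.2)
  refine ⟨i, a, a.2, mem_of_superset ?_ (image_preimage_subset ((↑) : A → X) (K i))⟩
  exact mem_nhds_subtype_iff_nhdsWithin.mp (mem_interior_iff_mem_nhds.mp ha)

/-- For `g ∈ A` and `d` large, `a + d⁻¹ • (g - a) ∈ A` is close to `a`, hence in `K`; solving for
`g` and using that `K` is absolutely convex gives `g ∈ (2 * d) • K`. -/
theorem exists_subset_smul_of_mem_nhdsWithin {X : Type*} [AddCommGroup X] [Module ℝ X]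
    [TopologicalSpace X] [IsTopologicalAddGroup X] [ContinuousSMul ℝ X] {A K : Set X}
    (hA : Convex ℝ A) (hAb : Bornology.IsVonNBounded ℝ A) (hK : AbsConvex ℝ K) {a : X}
    (ha : a ∈ A) (hKa : K ∈ 𝓝[A] a) : ∃ r : ℝ, 0 < r ∧ A ⊆ r • K := by
  obtain ⟨O, hO, hOK⟩ := mem_nhdsWithin_iff_exists_mem_nhds_inter.mp hKa
  have hW : (a + ·) ⁻¹' O ∈ 𝓝 (0 : X) :=
    (continuous_const.add continuous_id).continuousAt.preimage_mem_nhds (by simpa using hO)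
  obtain ⟨c, -, hcA⟩ := ((hAb.sub (Bornology.isVonNBounded_singleton a)) hW).exists_pos
  set d := max c 1
  have hd : 0 < d := zero_lt_one.trans_le (le_max_right c 1)
  have hd1 : d⁻¹ ≤ 1 := inv_le_one_of_one_le₀ (le_max_right c 1)
  refine ⟨2 * d, by positivity, fun g hg => ?_⟩
  have hgK : a + d⁻¹ • (g - a) ∈ K := by
    refine hOK ⟨?_, hA.add_smul_sub_mem ha hg ⟨by positivity, hd1⟩⟩
    have := hcA d (by simp [d, abs_of_pos hd]) (sub_mem_sub hg (mem_singleton a))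
    rwa [mem_smul_set_iff_inv_smul_mem₀ hd.ne'] at this
  have haK : (-(1 - d⁻¹)) • a ∈ K := by
    refine hK.1.smul_mem ?_ (hOK ⟨mem_of_mem_nhds hO, ha⟩)
    rw [norm_neg, Real.norm_of_nonneg (sub_nonneg.mpr hd1)]
    linarith [inv_pos.mpr hd]
  rw [mem_smul_set_iff_inv_smul_mem₀ (by positivity)]
  convert hK.2 hgK haK (by norm_num : (0 : ℝ) ≤ 1 / 2) (by norm_num : (0 : ℝ) ≤ 1 / 2)
    (by norm_num) using 1
  module

section BalancedConvex

variable {𝕜 E : Type*} [RCLike 𝕜] [AddCommGroup E] [Module 𝕜 E] [Module ℝ E]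
  [IsScalarTower ℝ 𝕜 E]

theorem Convex.balancedCore {s : Set E} (hs : Convex ℝ s) (h0 : (0 : E) ∈ s) :
    Convex ℝ (balancedCore 𝕜 s) := by
  rw [balancedCore_eq_iInter h0]
  exact convex_iInter₂ fun r _ => hs.linear_image ((LinearMap.lsmul 𝕜 E r).restrictScalars ℝ)

variable (𝕜 E) [TopologicalSpace E] [IsTopologicalAddGroup E] [ContinuousSMul 𝕜 E]
  [LocallyConvexSpace ℝ E]

theorem nhds_hasBasis_isClosed_balanced_convex :
    (𝓝 (0 : E)).HasBasis (fun s ↦ s ∈ 𝓝 (0 : E) ∧ IsClosed s ∧ Balanced 𝕜 s ∧ Convex ℝ s) id := by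
  have := IsScalarTower.continuousSMul (M := ℝ) (α := E) 𝕜
  refine (nhds_hasBasis_absConvex_closed ℝ E).to_hasBasis' (fun s ⟨hs, hsc, hsa⟩ => ?_)
    fun s hs => hs.1
  exact ⟨balancedCore 𝕜 s, ⟨balancedCore_mem_nhds_zero hs, hsc.balancedCore,
    balancedCore_balanced s, hsa.2.balancedCore (mem_of_mem_nhds hs)⟩, balancedCore_subset s⟩

end BalancedConvex

section Polar

variable (𝕜 : Type*) {E : Type*} [RCLike 𝕜] [AddCommGroup E] [Module 𝕜 E]

/-- The polar of `U`, made of all linear functionals, continuous or not, bounded by `1` on `U`: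
as a subset of the product space `E → 𝕜` it is compact by Tychonoff. -/
def linearPolar (U : Set E) : Set (E → 𝕜) :=
  range ((↑) : (E →ₗ[𝕜] 𝕜) → E → 𝕜) ∩ {g | ∀ x ∈ U, ‖g x‖ ≤ 1}

variable {𝕜} {U : Set E}

theorem zero_mem_linearPolar : (0 : E → 𝕜) ∈ linearPolar 𝕜 U :=
  ⟨⟨0, rfl⟩, fun x _ => by simp⟩

theorem linearPolar_anti {V : Set E} (hUV : U ⊆ V) : linearPolar 𝕜 V ⊆ linearPolar 𝕜 U :=
  fun _ ⟨hf, hg⟩ => ⟨hf, fun x hx => hg x (hUV hx)⟩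

theorem absConvex_linearPolar : AbsConvex ℝ (linearPolar 𝕜 U) := by
  refine ⟨fun r hr => ?_, fun g hg h hh a b ha hb hab => ?_⟩
  · rintro _ ⟨g, ⟨⟨f, rfl⟩, hg⟩, rfl⟩
    refine ⟨⟨r • f, rfl⟩, fun x hx => ?_⟩
    show ‖r • f x‖ ≤ 1
    rw [norm_smul]
    exact mul_le_one₀ hr (norm_nonneg _) (hg x hx)
  · obtain ⟨⟨f, rfl⟩, hg⟩ := hg
    obtain ⟨⟨k, rfl⟩, hk⟩ := hh
    refine ⟨⟨a • f + b • k, rfl⟩, fun x hx => ?_⟩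
    calc ‖a • f x + b • k x‖ ≤ a * ‖f x‖ + b * ‖k x‖ := by
          simpa [norm_smul, abs_of_nonneg ha, abs_of_nonneg hb] using
            norm_add_le (a • f x) (b • k x)
      _ ≤ a * 1 + b * 1 := by gcongr <;> [exact hg x hx; exact hk x hx]
      _ = 1 := by rw [mul_one, mul_one, hab]

theorem Balanced.norm_le_one_of_re_lt_one (hU : Balanced 𝕜 U) {f : E →ₗ[𝕜] 𝕜}
    (hf : ∀ x ∈ U, RCLike.re (f x) < 1) {x : E} (hx : x ∈ U) : ‖f x‖ ≤ 1 := by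
  obtain ⟨c, hc, hfx⟩ := RCLike.exists_norm_eq_mul_self (f x)
  have := hf _ (hU.smul_mem hc.le hx)
  rw [map_smul, smul_eq_mul, ← hfx, RCLike.ofReal_re] at this
  exact this.le

variable [TopologicalSpace E]

theorem exists_norm_le_of_mem_linearPolar [ContinuousSMul 𝕜 E] (hU : U ∈ 𝓝 0) (y : E) :
    ∃ M, ∀ g ∈ linearPolar 𝕜 U, ‖g y‖ ≤ M := by
  obtain ⟨r, hr, hrU⟩ := ((absorbent_nhds_zero (𝕜 := 𝕜) hU) y).exists_pos
  have hnorm : ‖(r : 𝕜)‖ = r := RCLike.norm_of_nonneg hr.le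
  obtain ⟨u, hu, rfl⟩ := hrU r hnorm.ge rfl
  refine ⟨r, ?_⟩
  rintro _ ⟨⟨f, rfl⟩, hg⟩
  rw [map_smul, norm_smul, hnorm]
  exact mul_le_of_le_one_right hr.le (hg u hu)

theorem isVonNBounded_linearPolar [ContinuousSMul 𝕜 E] (hU : U ∈ 𝓝 0) :
    Bornology.IsVonNBounded ℝ (linearPolar 𝕜 U) := by
  refine Bornology.isVonNBounded_pi_iff.2 fun y => ?_
  obtain ⟨M, hM⟩ := exists_norm_le_of_mem_linearPolar (𝕜 := 𝕜) hU y
  refine (NormedSpace.isVonNBounded_closedBall ℝ 𝕜 M).subset ?_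
  rintro _ ⟨g, hg, rfl⟩
  simpa using hM g hg

theorem isCompact_linearPolar [ContinuousSMul 𝕜 E] (hU : U ∈ 𝓝 0) :
    IsCompact (linearPolar 𝕜 U) := by
  choose M hM using exists_norm_le_of_mem_linearPolar (𝕜 := 𝕜) hU
  refine (isCompact_univ_pi fun y => isCompact_closedBall (0 : 𝕜) (M y)).of_isClosed_subset ?_
    fun g hg y _ => by simpa using hM y g hg
  refine (LinearMap.isClosed_range_coe E 𝕜 (RingHom.id 𝕜)).inter ?_
  simpa only [ofPred_forall] using
    isClosed_biInter fun x _ => isClosed_le (continuous_apply x).norm continuous_const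

theorem continuous_of_coe_mem_linearPolar [IsTopologicalAddGroup E] [ContinuousConstSMul 𝕜 E]
    (hU : U ∈ 𝓝 0) {f : E →ₗ[𝕜] 𝕜} (hf : ⇑f ∈ linearPolar 𝕜 U) : Continuous f := by
  have hp : Continuous f.toSeminorm :=
    Seminorm.continuous' (r := 1) (mem_of_superset hU fun x hx => by simpa using hf.2 x hx)
  refine continuous_of_continuousAt_zero f ?_
  rw [ContinuousAt, map_zero, tendsto_zero_iff_norm_tendsto_zero]
  simpa [LinearMap.coe_toSeminorm] using hp.tendsto 0

theorem mem_of_forall_norm_le_one_of_mem_linearPolar [IsTopologicalAddGroup E]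
    [ContinuousSMul 𝕜 E] [Module ℝ E] [IsScalarTower ℝ 𝕜 E] [LocallyConvexSpace ℝ E]
    (hUc : IsClosed U) (hUb : Balanced 𝕜 U) (hUx : Convex ℝ U) (h0 : (0 : E) ∈ U) {z : E}
    (hz : ∀ g ∈ linearPolar 𝕜 U, ‖g z‖ ≤ 1) : z ∈ U := by
  by_contra hzU
  obtain ⟨f, u, hfU, hfz⟩ := RCLike.geometric_hahn_banach_closed_point (𝕜 := 𝕜) hUx hUc hzU
  have hu : 0 < u := by simpa using hfU 0 h0
  set g : E →ₗ[𝕜] 𝕜 := ((u⁻¹ : ℝ) : 𝕜) • (f : E →ₗ[𝕜] 𝕜)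
  have hre : ∀ x, RCLike.re (g x) = u⁻¹ * RCLike.re (f x) := fun x => by
    simp [g, RCLike.smul_re]
  have hg : ⇑g ∈ linearPolar 𝕜 U := by
    refine ⟨⟨g, rfl⟩, fun x hx => hUb.norm_le_one_of_re_lt_one (fun a ha => ?_) hx⟩
    rw [hre, inv_mul_lt_one₀ hu]
    exact hfU a ha
  have hgz : 1 < RCLike.re (g z) := by
    rw [hre, one_lt_inv_mul₀ hu]
    exact hfz
  linarith [hz g hg, RCLike.re_le_norm (g z)]

theorem exists_mem_nhds_mem_image_comp_linearPolar [IsTopologicalAddGroup E]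
    [ContinuousConstSMul 𝕜 E]
    {F : Type*} [AddCommGroup F] [Module 𝕜 F] [TopologicalSpace F] (T : E →L[𝕜] F)
    (hT : ∀ l : E →L[𝕜] 𝕜, ∃ μ : F →L[𝕜] 𝕜, μ.comp T = l) (hU : U ∈ 𝓝 0) {g : E → 𝕜}
    (hg : g ∈ linearPolar 𝕜 U) : ∃ V ∈ 𝓝 (0 : F), g ∈ (· ∘ T) '' linearPolar 𝕜 V := by
  obtain ⟨⟨f, rfl⟩, -⟩ := id hg
  obtain ⟨μ, hμ⟩ := hT ⟨f, continuous_of_coe_mem_linearPolar hU hg⟩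
  refine ⟨μ ⁻¹' Metric.closedBall 0 1,
    μ.continuous.tendsto' 0 0 (map_zero μ) (Metric.closedBall_mem_nhds 0 one_pos),
    μ, ⟨⟨μ, rfl⟩, fun y hy => by simpa using hy⟩, funext fun z => DFunLike.congr_fun hμ z⟩

end Polar

theorem tendsto_zero_of_adjoint_surjective_general
    {E F : Type*}
    [AddCommGroup E] [Module ℂ E] [UniformSpace E] [IsUniformAddGroup E]
    [ContinuousSMul ℂ E]
    [Module ℝ E] [IsScalarTower ℝ ℂ E] [LocallyConvexSpace ℝ E]
    [AddCommGroup F] [Module ℂ F] [UniformSpace F]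
    [ContinuousSMul ℂ F] [TopologicalSpace.MetrizableSpace F]
    (T : E →L[ℂ] F)
    (hsurj : ∀ lam : E →L[ℂ] ℂ, ∃ μ : F →L[ℂ] ℂ, μ.comp T = lam)
    (x : ℕ → E) (hx : Tendsto (fun j => T (x j)) atTop (nhds 0)) :
    Tendsto x atTop (nhds 0) := by
  refine (nhds_hasBasis_isClosed_balanced_convex ℂ E).tendsto_right_iff.2
    fun U ⟨hU, hUc, hUb, hUx⟩ => ?_
  obtain ⟨b, hb⟩ := (𝓝 (0 : F)).exists_antitone_basis
  set K : ℕ → Set (E → ℂ) := fun n => LinearMap.funLeft ℝ ℂ T '' linearPolar ℂ (b n)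
  have hcover : linearPolar ℂ U ⊆ ⋃ n, K n := fun g hg => by
    obtain ⟨V, hV, hgV⟩ := exists_mem_nhds_mem_image_comp_linearPolar T hsurj hU hg
    obtain ⟨n, hn⟩ := hb.mem_iff.1 hV
    exact mem_iUnion.2 ⟨n, image_mono (linearPolar_anti hn) hgV⟩
  have hKc : ∀ n, IsClosed (K n) := fun n => ((isCompact_linearPolar (hb.mem n)).image
    (continuous_pi fun z => continuous_apply (T z))).isClosed
  obtain ⟨n, g₀, hg₀, hn⟩ := (isCompact_linearPolar hU).exists_mem_nhdsWithin_of_subset_iUnion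
    ⟨0, zero_mem_linearPolar⟩ hKc hcover
  obtain ⟨r, hr, hUr⟩ := exists_subset_smul_of_mem_nhdsWithin absConvex_linearPolar.2
    (isVonNBounded_linearPolar hU) (absConvex_linearPolar.linear_image _) hg₀ hn
  have hr' : (r : ℂ) ≠ 0 := by exact_mod_cast hr.ne'
  filter_upwards [hx ((set_smul_mem_nhds_zero_iff (inv_ne_zero hr')).2 (hb.mem n))]
    with j ⟨y, hy, hTx⟩
  refine mem_of_forall_norm_le_one_of_mem_linearPolar hUc hUb hUx (mem_of_mem_nhds hU)
    fun g hg => ?_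
  obtain ⟨_, ⟨_, ⟨⟨μ, rfl⟩, hμ⟩, rfl⟩, rfl⟩ := hUr hg
  change (r : ℂ)⁻¹ • y = T (x j) at hTx
  show ‖r • μ (T (x j))‖ ≤ 1
  rw [← hTx, map_smul, smul_eq_mul, Complex.real_smul, mul_inv_cancel_left₀ hr']
  exact hμ y hy

/-- If `T : E → F` is a continuous linear injective operator between Fréchet
spaces whose adjoint `T* : F* → E*`, `T*μ = μ ∘ T`, is surjective, and `(x_j)` is a sequence
in `E` with `T x_j → 0`, then `x_j → 0`. -/
theorem tendsto_zero_of_adjoint_surjective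
    {E F : Type*}
    [AddCommGroup E] [Module ℂ E] [UniformSpace E] [IsUniformAddGroup E]
    [ContinuousSMul ℂ E] [CompleteSpace E] [TopologicalSpace.MetrizableSpace E]
    [Module ℝ E] [IsScalarTower ℝ ℂ E] [LocallyConvexSpace ℝ E]
    [AddCommGroup F] [Module ℂ F] [UniformSpace F] [IsUniformAddGroup F]
    [ContinuousSMul ℂ F] [CompleteSpace F] [TopologicalSpace.MetrizableSpace F]
    [Module ℝ F] [IsScalarTower ℝ ℂ F] [LocallyConvexSpace ℝ F]
    (T : E →L[ℂ] F) (hinj : Function.Injective T)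
    (hsurj : ∀ lam : E →L[ℂ] ℂ, ∃ μ : F →L[ℂ] ℂ, μ.comp T = lam)
    (x : ℕ → E) (hx : Tendsto (fun j => T (x j)) atTop (nhds 0)) :
    Tendsto x atTop (nhds 0) :=
  tendsto_zero_of_adjoint_surjective_general T hsurj x hx
end

section
/- Let u ∈ 𝒮(ℝ³) be a Schwartz function with ∫_{ℝ³} u(x) dx = 0. Then there exist Schwartz functions ω₁, ω₂, ω₃ ∈ 𝒮(ℝ³) such that u = −(∂₁ω₁ + ∂₂ω₂ + ∂₃ω₃), i.e. the divergence equation δω = u with δω = −∑ ∂_j ω_j admits a Schwartz solution. -/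
open Function Metric Finset

variable {E F G : Type*} [NormedAddCommGroup E] [NormedSpace ℝ E]
  [NormedAddCommGroup F] [NormedSpace ℝ F] [NormedAddCommGroup G] [NormedSpace ℝ G]

lemma tg_clm (L : E →L[ℝ] F) : Function.HasTemperateGrowth (fun x => L x) := by
  have hfd : fderiv ℝ (⇑L) = fun _ : E => L := funext fun x => L.fderiv
  apply Function.HasTemperateGrowth.of_fderiv (k := 1) (C := ‖L‖)
  · rw [hfd]; exact .const L
  · exact L.differentiable
  · intro x
    calc ‖L x‖ ≤ ‖L‖ * ‖x‖ := L.le_opNorm x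
    _ ≤ ‖L‖ * (1 + ‖x‖) ^ 1 := by
        have := norm_nonneg x
        have := norm_nonneg L
        nlinarith

lemma tg_add {f g : E → F} (hf : Function.HasTemperateGrowth f)
    (hg : Function.HasTemperateGrowth g) :
    Function.HasTemperateGrowth (fun x => f x + g x) := by
  refine ⟨hf.1.add hg.1, fun n => ?_⟩
  obtain ⟨k1, C1, h1⟩ := hf.2 n
  obtain ⟨k2, C2, h2⟩ := hg.2 n
  refine ⟨max k1 k2, |C1| + |C2|, fun x => ?_⟩
  have hx : (1:ℝ) ≤ 1 + ‖x‖ := by have := norm_nonneg x; linarith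
  have e1 : (1 + ‖x‖) ^ k1 ≤ (1 + ‖x‖) ^ max k1 k2 := pow_le_pow_right₀ hx (le_max_left _ _)
  have e2 : (1 + ‖x‖) ^ k2 ≤ (1 + ‖x‖) ^ max k1 k2 := pow_le_pow_right₀ hx (le_max_right _ _)
  have hp : (0:ℝ) ≤ (1 + ‖x‖) ^ max k1 k2 := by positivity
  calc ‖iteratedFDeriv ℝ n (fun x => f x + g x) x‖
      = ‖iteratedFDeriv ℝ n f x + iteratedFDeriv ℝ n g x‖ := by
        congr 1
        exact iteratedFDeriv_add_apply (hf.1.of_le (m := (n : WithTop ℕ∞)) (by exact_mod_cast le_top)).contDiffAt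
          (hg.1.of_le (m := (n : WithTop ℕ∞)) (by exact_mod_cast le_top)).contDiffAt
    _ ≤ ‖iteratedFDeriv ℝ n f x‖ + ‖iteratedFDeriv ℝ n g x‖ := norm_add_le _ _
    _ ≤ C1 * (1 + ‖x‖) ^ k1 + C2 * (1 + ‖x‖) ^ k2 := add_le_add (h1 x) (h2 x)
    _ ≤ |C1| * (1 + ‖x‖) ^ max k1 k2 + |C2| * (1 + ‖x‖) ^ max k1 k2 := by
        gcongr <;> first
          | exact le_abs_self _
          | nlinarith [le_abs_self C1, le_abs_self C2, abs_nonneg C1, abs_nonneg C2,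
              pow_nonneg (le_trans zero_le_one hx) k1, pow_nonneg (le_trans zero_le_one hx) k2]
    _ = (|C1| + |C2|) * (1 + ‖x‖) ^ max k1 k2 := by ring

lemma tg_mul {A : Type*} [NormedRing A] [NormedAlgebra ℝ A] {f g : E → A}
    (hf : Function.HasTemperateGrowth f) (hg : Function.HasTemperateGrowth g) :
    Function.HasTemperateGrowth (fun x => f x * g x) := by
  refine ⟨hf.1.mul hg.1, fun n => ?_⟩
  obtain ⟨k1, C1, hC1, h1⟩ := hf.norm_iteratedFDeriv_le_uniform n
  obtain ⟨k2, C2, hC2, h2⟩ := hg.norm_iteratedFDeriv_le_uniform n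
  refine ⟨k1 + k2, 2 ^ n * (C1 * C2), fun x => ?_⟩
  have hx : (1:ℝ) ≤ 1 + ‖x‖ := by have := norm_nonneg x; linarith
  have hp1 : (0:ℝ) ≤ (1 + ‖x‖) ^ k1 := by positivity
  have hp2 : (0:ℝ) ≤ (1 + ‖x‖) ^ k2 := by positivity
  calc ‖iteratedFDeriv ℝ n (fun x => f x * g x) x‖
      ≤ ∑ i ∈ range (n + 1), (n.choose i : ℝ) * ‖iteratedFDeriv ℝ i f x‖ *
          ‖iteratedFDeriv ℝ (n - i) g x‖ :=
        norm_iteratedFDeriv_mul_le hf.1 hg.1 x (by exact_mod_cast le_top)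
    _ ≤ ∑ i ∈ range (n + 1), (n.choose i : ℝ) * ((C1 * (1 + ‖x‖) ^ k1) * (C2 * (1 + ‖x‖) ^ k2)) := by
        apply Finset.sum_le_sum
        intro i hi
        rw [Finset.mem_range, Nat.lt_succ_iff] at hi
        rw [mul_assoc]
        exact mul_le_mul_of_nonneg_left
          (mul_le_mul (h1 i hi x) (h2 (n - i) (Nat.sub_le _ _) x) (norm_nonneg _) (by positivity))
          (by positivity)
    _ = (∑ i ∈ range (n + 1), (n.choose i : ℝ)) * ((C1 * (1 + ‖x‖) ^ k1) * (C2 * (1 + ‖x‖) ^ k2)) := by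
        rw [Finset.sum_mul]
    _ = 2 ^ n * (C1 * C2) * (1 + ‖x‖) ^ (k1 + k2) := by
        rw [← Nat.cast_sum, Nat.sum_range_choose, pow_add]
        push_cast
        ring

lemma tg_of_compactSupport {f : E → F} (hs : ContDiff ℝ ((⊤ : ℕ∞) : WithTop ℕ∞) f) (hc : HasCompactSupport f) :
    Function.HasTemperateGrowth f := by
  refine ⟨hs, fun n => ?_⟩
  have hs' : Continuous fun x => iteratedFDeriv ℝ n f x :=
    hs.continuous_iteratedFDeriv (by exact_mod_cast le_top)
  obtain ⟨C, hC⟩ := hs'.bounded_above_of_compact_support (hc.iteratedFDeriv n)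
  exact ⟨0, C, fun x => by simpa using hC x⟩

lemma tg_comp_clm {f : E → F} (g : F →L[ℝ] G) (hf : Function.HasTemperateGrowth f) :
    Function.HasTemperateGrowth (fun x => g (f x)) := by
  refine ⟨g.contDiff.comp hf.1, fun n => ?_⟩
  obtain ⟨k, C, h⟩ := hf.2 n
  refine ⟨k, ‖g‖ * C, fun x => ?_⟩
  have : iteratedFDeriv ℝ n (fun x => g (f x)) x =
      g.compContinuousMultilinearMap (iteratedFDeriv ℝ n f x) :=
    g.iteratedFDeriv_comp_left hf.1.contDiffAt (by exact_mod_cast le_top)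
  rw [this, mul_assoc]
  exact le_trans (g.norm_compContinuousMultilinearMap_le _)
    (mul_le_mul_of_nonneg_left (h x) (norm_nonneg g))

open Function Metric Finset

variable {E : Type*} [NormedAddCommGroup E] [NormedSpace ℝ E]

lemma fderiv_inv_comp {f : E → ℝ} (hf : Differentiable ℝ f) (h1 : ∀ x, 1 ≤ f x) :
    fderiv ℝ (fun x => (f x)⁻¹) =
      fun x => (-((f x)⁻¹ * (f x)⁻¹)) • fderiv ℝ f x := by
  funext x
  have hne : f x ≠ 0 := by have := h1 x; linarith
  have hd : HasFDerivAt (fun y => (f y)⁻¹) ((-(f x ^ 2)⁻¹) • fderiv ℝ f x) x :=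
    (hasDerivAt_inv hne).comp_hasFDerivAt x (hf x).hasFDerivAt
  rw [hd.fderiv]
  congr 1
  rw [sq, mul_inv]

lemma tg_inv {f : E → ℝ} (hf : Function.HasTemperateGrowth f) (h1 : ∀ x, 1 ≤ f x) :
    Function.HasTemperateGrowth (fun x => (f x)⁻¹) := by
  have hne : ∀ x, f x ≠ 0 := fun x => by have := h1 x; linarith
  have hsm : ContDiff ℝ ((⊤ : ℕ∞) : WithTop ℕ∞) (fun x => (f x)⁻¹) := hf.1.inv hne
  refine ⟨hsm, ?_⟩
  have key : ∀ n : ℕ, ∃ (k : ℕ) (C : ℝ), 0 ≤ C ∧ ∀ m ≤ n, ∀ x,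
      ‖iteratedFDeriv ℝ m (fun x => (f x)⁻¹) x‖ ≤ C * (1 + ‖x‖) ^ k := by
    intro n
    induction n with
    | zero =>
      refine ⟨0, 1, zero_le_one, ?_⟩
      intro m hm x
      interval_cases m
      rw [norm_iteratedFDeriv_zero]
      have h1x := h1 x
      have hb : ‖(f x)⁻¹‖ ≤ 1 := by
        rw [Real.norm_eq_abs, abs_of_pos (by positivity), inv_le_one_iff₀]
        right; exact h1x
      simpa using hb
    | succ n ih =>
      obtain ⟨k, C, hC, hIH⟩ := ih
      obtain ⟨k', C', hC', hf'⟩ := hf.norm_iteratedFDeriv_le_uniform (n + 1)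
      have hprod : ∀ m ≤ n, ∀ x,
          ‖iteratedFDeriv ℝ m (fun x => -((f x)⁻¹ * (f x)⁻¹)) x‖ ≤
            2 ^ n * (C * C) * (1 + ‖x‖) ^ (k + k) := by
        intro m hm x
        have hx : (1:ℝ) ≤ 1 + ‖x‖ := by have := norm_nonneg x; linarith
        have e1 : (fun x => -((f x)⁻¹ * (f x)⁻¹)) = -(fun x => (f x)⁻¹ * (f x)⁻¹) := rfl
        rw [e1]
        have e2 : ‖iteratedFDeriv ℝ m (-(fun x => (f x)⁻¹ * (f x)⁻¹)) x‖
            = ‖iteratedFDeriv ℝ m (fun x => (f x)⁻¹ * (f x)⁻¹) x‖ := by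
          rw [iteratedFDeriv_neg_apply, norm_neg]
        rw [e2]
        have hP : (0:ℝ) ≤ (C * (1 + ‖x‖) ^ k) * (C * (1 + ‖x‖) ^ k) :=
          mul_nonneg (mul_nonneg hC (by positivity)) (mul_nonneg hC (by positivity))
        calc ‖iteratedFDeriv ℝ m (fun x => (f x)⁻¹ * (f x)⁻¹) x‖
            ≤ ∑ i ∈ range (m + 1), (m.choose i : ℝ) * ‖iteratedFDeriv ℝ i (fun x => (f x)⁻¹) x‖ *
              ‖iteratedFDeriv ℝ (m - i) (fun x => (f x)⁻¹) x‖ :=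
            norm_iteratedFDeriv_mul_le hsm hsm x (by exact_mod_cast le_top)
          _ ≤ ∑ i ∈ range (m + 1), (m.choose i : ℝ) *
                ((C * (1 + ‖x‖) ^ k) * (C * (1 + ‖x‖) ^ k)) := by
              apply Finset.sum_le_sum
              intro i hi
              rw [Finset.mem_range, Nat.lt_succ_iff] at hi
              rw [mul_assoc]
              exact mul_le_mul_of_nonneg_left
                (mul_le_mul (hIH i (hi.trans hm) x) (hIH (m - i) ((Nat.sub_le _ _).trans hm) x)
                  (norm_nonneg _) (mul_nonneg hC (by positivity))) (by positivity)
          _ = (2:ℝ) ^ m * ((C * (1 + ‖x‖) ^ k) * (C * (1 + ‖x‖) ^ k)) := by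
              rw [← Finset.sum_mul, ← Nat.cast_sum, Nat.sum_range_choose]
              push_cast; ring
          _ ≤ (2:ℝ) ^ n * ((C * (1 + ‖x‖) ^ k) * (C * (1 + ‖x‖) ^ k)) :=
              mul_le_mul_of_nonneg_right (pow_le_pow_right₀ one_le_two hm) hP
          _ = 2 ^ n * (C * C) * (1 + ‖x‖) ^ (k + k) := by rw [pow_add]; ring
      refine ⟨k + k + k', 2 ^ n * (C * C) * (2 ^ n * C') + C * (1 + C'), ?_, ?_⟩
      · have : (0:ℝ) ≤ 2 ^ n * (C * C) * (2 ^ n * C') :=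
          mul_nonneg (mul_nonneg (by positivity) (mul_nonneg hC hC))
            (mul_nonneg (by positivity) hC')
        nlinarith
      intro m hm x
      have hx : (1:ℝ) ≤ 1 + ‖x‖ := by have := norm_nonneg x; linarith
      have hbig : (0:ℝ) ≤ 2 ^ n * (C * C) * (2 ^ n * C') :=
        mul_nonneg (mul_nonneg (by positivity) (mul_nonneg hC hC))
          (mul_nonneg (by positivity) hC')
      have hB : (0:ℝ) ≤ C * (1 + C') := mul_nonneg hC (by linarith)
      have hpk : (0:ℝ) ≤ (1 + ‖x‖) ^ (k + k + k') := by positivity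
      rcases hm.lt_or_eq with hm' | rfl
      · have hm'' : m ≤ n := Nat.lt_succ_iff.mp hm'
        refine (hIH m hm'' x).trans ?_
        calc C * (1 + ‖x‖) ^ k
            ≤ (C * (1 + C')) * (1 + ‖x‖) ^ (k + k + k') := by
              apply mul_le_mul (by nlinarith) (pow_le_pow_right₀ hx (by omega)) (by positivity) hB
          _ ≤ (2 ^ n * (C * C) * (2 ^ n * C') + C * (1 + C')) * (1 + ‖x‖) ^ (k + k + k') := by
              apply mul_le_mul_of_nonneg_right _ hpk
              linarith
      · rw [← norm_iteratedFDeriv_fderiv]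
        rw [fderiv_inv_comp (hf.1.differentiable (by simp)) h1]
        have hA : (0:ℝ) ≤ 2 ^ n * (C * C) * (1 + ‖x‖) ^ (k + k) :=
          mul_nonneg (mul_nonneg (by positivity) (mul_nonneg hC hC)) (by positivity)
        calc ‖iteratedFDeriv ℝ n (fun x => (-((f x)⁻¹ * (f x)⁻¹)) • fderiv ℝ f x) x‖
            ≤ ∑ i ∈ range (n + 1), (n.choose i : ℝ) *
              ‖iteratedFDeriv ℝ i (fun x => -((f x)⁻¹ * (f x)⁻¹)) x‖ *
              ‖iteratedFDeriv ℝ (n - i) (fderiv ℝ f) x‖ := by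
              apply norm_iteratedFDeriv_smul_le
              · exact (hsm.mul hsm).neg
              · exact hf.1.fderiv_right (by exact_mod_cast le_top)
              · exact_mod_cast le_top
          _ ≤ ∑ i ∈ range (n + 1), (n.choose i : ℝ) *
                (2 ^ n * (C * C) * (1 + ‖x‖) ^ (k + k)) * (C' * (1 + ‖x‖) ^ k') := by
              apply Finset.sum_le_sum
              intro i hi
              rw [Finset.mem_range, Nat.lt_succ_iff] at hi
              have b1 := hprod i hi x
              have b2 : ‖iteratedFDeriv ℝ (n - i) (fderiv ℝ f) x‖ ≤ C' * (1 + ‖x‖) ^ k' := by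
                rw [norm_iteratedFDeriv_fderiv]
                exact hf' (n - i + 1) (by omega) x
              exact mul_le_mul (mul_le_mul_of_nonneg_left b1 (by positivity)) b2 (norm_nonneg _)
                (mul_nonneg (by positivity) hA)
          _ = (2:ℝ) ^ n * ((2 ^ n * (C * C) * (1 + ‖x‖) ^ (k + k)) * (C' * (1 + ‖x‖) ^ k')) := by
              simp only [mul_assoc, ← Finset.sum_mul]
              rw [← Nat.cast_sum, Nat.sum_range_choose]
              push_cast; ring
          _ = 2 ^ n * (C * C) * (2 ^ n * C') * (1 + ‖x‖) ^ (k + k + k') := by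
              rw [pow_add, pow_add]; ring
          _ ≤ (2 ^ n * (C * C) * (2 ^ n * C') + C * (1 + C')) * (1 + ‖x‖) ^ (k + k + k') := by
              apply mul_le_mul_of_nonneg_right _ hpk
              linarith
  intro n
  obtain ⟨k, C, _, h⟩ := key n
  exact ⟨k, C, fun x => h n le_rfl x⟩

open Function Metric Finset MeasureTheory intervalIntegral

variable {E F G : Type*} [NormedAddCommGroup E] [NormedSpace ℝ E]
  [NormedAddCommGroup F] [NormedSpace ℝ F] [NormedAddCommGroup G] [NormedSpace ℝ G]

/-- A smooth compactly supported function is a Schwartz function. -/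
noncomputable def schwartzOfCompactSupport {f : E → F}
    (hs : ContDiff ℝ ((⊤ : ℕ∞) : WithTop ℕ∞) f) (hc : HasCompactSupport f) :
    SchwartzMap E F where
  toFun := f
  smooth' := hs
  decay' := by
    intro k n
    obtain ⟨R, hR0, hR⟩ : ∃ R : ℝ, 0 ≤ R ∧ tsupport f ⊆ closedBall 0 R := by
      obtain ⟨R, hR⟩ := hc.isBounded.subset_closedBall 0
      exact ⟨max R 0, le_max_right _ _, hR.trans (closedBall_subset_closedBall (le_max_left _ _))⟩
    have hcont : Continuous fun x => iteratedFDeriv ℝ n f x :=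
      hs.continuous_iteratedFDeriv (by exact_mod_cast le_top)
    obtain ⟨C, hC⟩ := hcont.bounded_above_of_compact_support (hc.iteratedFDeriv n)
    refine ⟨R ^ k * C, fun x => ?_⟩
    by_cases hx : x ∈ tsupport f
    · have hxR : ‖x‖ ≤ R := by simpa [dist_eq_norm] using hR hx
      have h0C : (0:ℝ) ≤ C := le_trans (norm_nonneg _) (hC x)
      exact mul_le_mul (pow_le_pow_left₀ (norm_nonneg x) hxR k) (hC x) (norm_nonneg _)
        (by positivity)
    · have : iteratedFDeriv ℝ n f x = 0 := by
        apply image_eq_zero_of_notMem_tsupport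
        intro h
        exact hx (tsupport_iteratedFDeriv_subset n h)
      rw [this]
      simp only [norm_zero, mul_zero]
      have h0C : (0:ℝ) ≤ C := le_trans (norm_nonneg _) (hC x)
      positivity

@[simp] lemma schwartzOfCompactSupport_apply {f : E → F}
    (hs : ContDiff ℝ ((⊤ : ℕ∞) : WithTop ℕ∞) f) (hc : HasCompactSupport f) (x : E) :
    schwartzOfCompactSupport hs hc x = f x := rfl

section Param

variable {E₀ : Type} [NormedAddCommGroup E₀] [NormedSpace ℝ E₀] [ProperSpace E₀]

/-- Smoothness of a parametric interval integral with smooth integrand. -/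
lemma contDiff_parametric_intervalIntegral :
    ∀ (n : ℕ) {G : Type u} [NormedAddCommGroup G] [NormedSpace ℝ G] [CompleteSpace G]
      (F : ℝ × E₀ → G), ContDiff ℝ ((⊤ : ℕ∞) : WithTop ℕ∞) F →
      ContDiff ℝ n (fun x : E₀ => ∫ t in (0:ℝ)..1, F (t, x)) := by
  intro n
  induction n with
  | zero =>
    intro G _ _ _ F hF
    have h0 : ((0:ℕ) : WithTop ℕ∞) = 0 := by norm_cast
    rw [h0, contDiff_zero]
    exact intervalIntegral.continuous_parametric_intervalIntegral_of_continuous'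
      (f := fun x t => F (t, x)) (by exact hF.continuous.comp continuous_swap) 0 1
  | succ n ih =>
    intro G _ _ _ F hF
    have hFd : Differentiable ℝ F := hF.differentiable (by simp)
    -- partial derivative in the second variable
    set F' : ℝ × E₀ → (E₀ →L[ℝ] G) :=
      fun p => (fderiv ℝ F p).comp (ContinuousLinearMap.inr ℝ ℝ E₀) with hF'def
    have hF'smooth : ContDiff ℝ ((⊤ : ℕ∞) : WithTop ℕ∞) F' := by
      apply ContDiff.clm_comp
      · exact hF.fderiv_right (by exact_mod_cast le_top)
      · exact contDiff_const
    have hderiv : ∀ (t : ℝ) (x : E₀), HasFDerivAt (fun y => F (t, y)) (F' (t, x)) x := by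
      intro t x
      have h1 : HasFDerivAt F (fderiv ℝ F (t, x)) (t, x) := (hFd (t, x)).hasFDerivAt
      have h2 : HasFDerivAt (fun y : E₀ => ((t, y) : ℝ × E₀))
          (ContinuousLinearMap.inr ℝ ℝ E₀) x := hasFDerivAt_prodMk_right t x
      exact h1.comp x h2
    have key : ∀ x₀ : E₀, HasFDerivAt (fun x => ∫ t in (0:ℝ)..1, F (t, x))
        (∫ t in (0:ℝ)..1, F' (t, x₀)) x₀ := by
      intro x₀
      haveI : SecondCountableTopologyEither ℝ (E₀ →L[ℝ] G) :=
        secondCountableTopologyEither_of_left ℝ _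
      haveI : SecondCountableTopologyEither ℝ G := secondCountableTopologyEither_of_left ℝ _
      have hK : IsCompact ((Set.uIcc (0:ℝ) 1) ×ˢ closedBall x₀ 1) :=
        isCompact_uIcc.prod (isCompact_closedBall x₀ 1)
      obtain ⟨C, hC⟩ := hK.exists_bound_of_continuousOn (hF'smooth.continuous.continuousOn)
      apply intervalIntegral.hasFDerivAt_integral_of_dominated_of_fderiv_le
        (F := fun x t => F (t, x)) (F' := fun x t => F' (t, x)) (bound := fun _ => C)
        (ball_mem_nhds x₀ one_pos)
      · filter_upwards with x
        exact (hF.continuous.comp (continuous_id.prodMk continuous_const)).aestronglyMeasurable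
      · exact (hF.continuous.comp (continuous_id.prodMk continuous_const)).intervalIntegrable 0 1
      · exact (hF'smooth.continuous.comp (continuous_id.prodMk continuous_const)).aestronglyMeasurable
      · filter_upwards with t ht x hx
        exact hC (t, x) ⟨Set.uIoc_subset_uIcc ht, ball_subset_closedBall hx⟩
      · exact intervalIntegrable_const
      · filter_upwards with t ht x hx
        exact hderiv t x
    rw [show ((n+1 : ℕ) : WithTop ℕ∞) = ((n : ℕ) : WithTop ℕ∞) + 1 by push_cast; rfl,
      contDiff_succ_iff_fderiv]
    refine ⟨fun x => (key x).differentiableAt, by simp, ?_⟩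
    have : (fderiv ℝ fun x => ∫ t in (0:ℝ)..1, F (t, x)) =
        fun x₀ => ∫ t in (0:ℝ)..1, F' (t, x₀) := funext fun x₀ => (key x₀).fderiv
    rw [this]
    exact ih (G := E₀ →L[ℝ] G) F' hF'smooth

end Param
open SchwartzMap MeasureTheory Metric

noncomputable section Decomp

local notation "E3" => EuclideanSpace ℝ (Fin 3)

lemma schwartz_decomp (g : SchwartzMap E3 ℂ) (hg0 : g 0 = 0) :
    ∃ G : Fin 3 → SchwartzMap E3 ℂ,
      ∀ ξ : E3, g ξ = ∑ j : Fin 3, (ξ j : ℂ) * G j ξ := by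
  classical
  set φb : ContDiffBump (0 : E3) := ⟨1, 2, one_pos, one_lt_two⟩ with hφb
  set ψb : ContDiffBump (0 : E3) := ⟨2, 3, two_pos, by norm_num⟩ with hψb
  set M : E3 → ℝ := fun ξ => φb ξ + (ξ 0 * ξ 0 + (ξ 1 * ξ 1 + ξ 2 * ξ 2)) with hM
  have hnorm : ∀ ξ : E3, ‖ξ‖ ^ 2 = ξ 0 * ξ 0 + (ξ 1 * ξ 1 + ξ 2 * ξ 2) := by
    intro ξ
    rw [EuclideanSpace.norm_eq, Real.sq_sqrt (Finset.sum_nonneg fun i _ => sq_nonneg _)]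
    simp [Fin.sum_univ_three]
    ring
  have hM1 : ∀ ξ, 1 ≤ M ξ := by
    intro ξ
    by_cases h : ξ ∈ closedBall (0 : E3) 1
    · have h1 : φb ξ = 1 := φb.one_of_mem_closedBall h
      have h2 : (0:ℝ) ≤ ξ 0 * ξ 0 + (ξ 1 * ξ 1 + ξ 2 * ξ 2) := by
        have := mul_self_nonneg (ξ 0); have := mul_self_nonneg (ξ 1); have := mul_self_nonneg (ξ 2)
        linarith
      simp only [hM]
      rw [h1]; linarith
    · have h1 : 1 < ‖ξ‖ := by
        rw [mem_closedBall, dist_zero_right] at h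
        linarith [not_le.mp h]
      have h2 : (0:ℝ) ≤ φb ξ := φb.nonneg
      have h3 := hnorm ξ
      simp only [hM]
      nlinarith
  have hMne : ∀ ξ, M ξ ≠ 0 := fun ξ => by have := hM1 ξ; linarith
  -- temperate growth facts
  have hφtg : Function.HasTemperateGrowth (fun ξ : E3 => φb ξ) :=
    tg_of_compactSupport φb.contDiff φb.hasCompactSupport
  have hcoord : ∀ j : Fin 3, Function.HasTemperateGrowth (fun ξ : E3 => ξ j) := by
    intro j
    exact tg_clm (EuclideanSpace.proj j)
  have hMtg : Function.HasTemperateGrowth M := by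
    exact tg_add hφtg (tg_add (tg_mul (hcoord 0) (hcoord 0))
      (tg_add (tg_mul (hcoord 1) (hcoord 1)) (tg_mul (hcoord 2) (hcoord 2))))
  have hMinv : Function.HasTemperateGrowth (fun ξ => (M ξ)⁻¹) := tg_inv hMtg hM1
  -- the symbols q_j, complex valued
  have hqtg : ∀ j : Fin 3,
      Function.HasTemperateGrowth (fun ξ : E3 => ((ξ j * (M ξ)⁻¹ : ℝ) : ℂ)) := by
    intro j
    exact tg_comp_clm Complex.ofRealCLM (tg_mul (hcoord j) hMinv)
  -- the Schwartz functions T j = g * q_j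
  set T : Fin 3 → SchwartzMap E3 ℂ := fun j =>
    bilinLeftCLM (ContinuousLinearMap.mul ℝ ℂ) (hqtg j) g with hT
  have hTapp : ∀ j ξ, T j ξ = g ξ * ((ξ j * (M ξ)⁻¹ : ℝ) : ℂ) := fun j ξ => rfl
  -- the compactly supported part
  set G0 : E3 → ℂ := fun ξ => ((φb ξ * (M ξ)⁻¹ : ℝ) : ℂ) * g ξ with hG0def
  have hG0smooth : ContDiff ℝ ((⊤ : ℕ∞) : WithTop ℕ∞) G0 :=
    ((Complex.ofRealCLM.contDiff.comp (φb.contDiff.mul hMinv.1))).mul (g.smooth ⊤)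
  have hG00 : G0 0 = 0 := by simp [hG0def, hg0]
  have hG0z : ∀ ξ : E3, 2 ≤ ‖ξ‖ → G0 ξ = 0 := by
    intro ξ hξ
    have : φb ξ = 0 := φb.zero_of_le_dist (by simpa [dist_zero_right] using hξ)
    simp [hG0def, this]
  -- Hadamard integrals
  set H : Fin 3 → E3 → ℂ := fun j ξ =>
    ∫ t in (0:ℝ)..1, fderiv ℝ G0 (t • ξ) (EuclideanSpace.single j 1) with hH
  have hDsmooth : ContDiff ℝ ((⊤ : ℕ∞) : WithTop ℕ∞) (fderiv ℝ G0) :=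
    hG0smooth.fderiv_right (by exact_mod_cast le_top)
  have hFsmooth : ∀ j : Fin 3, ContDiff ℝ ((⊤ : ℕ∞) : WithTop ℕ∞)
      (fun p : ℝ × E3 => fderiv ℝ G0 (p.1 • p.2) (EuclideanSpace.single j 1)) := by
    intro j
    apply ContDiff.clm_apply
    · exact hDsmooth.comp (contDiff_fst.smul contDiff_snd)
    · exact contDiff_const
  have hHsmooth : ∀ j : Fin 3, ContDiff ℝ ((⊤ : ℕ∞) : WithTop ℕ∞) (H j) := by
    intro j
    rw [show ((⊤ : ℕ∞) : WithTop ℕ∞) = ((⊤ : ℕ∞) : WithTop ℕ∞) from rfl]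
    rw [contDiff_infty]
    intro n
    exact contDiff_parametric_intervalIntegral n _ (hFsmooth j)
  -- h j = ψb * H j, compactly supported smooth
  have hSsmooth : ∀ j : Fin 3, ContDiff ℝ ((⊤ : ℕ∞) : WithTop ℕ∞)
      (fun ξ : E3 => ((ψb ξ : ℝ) : ℂ) * H j ξ) := fun j =>
    (Complex.ofRealCLM.contDiff.comp ψb.contDiff).mul (hHsmooth j)
  have hScs : ∀ j : Fin 3, HasCompactSupport (fun ξ : E3 => ((ψb ξ : ℝ) : ℂ) * H j ξ) := by
    intro j
    apply HasCompactSupport.mul_right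
    exact ψb.hasCompactSupport.comp_left (g := fun r : ℝ => (r : ℂ)) (by simp)
  set S : Fin 3 → SchwartzMap E3 ℂ := fun j =>
    schwartzOfCompactSupport (hSsmooth j) (hScs j) with hS
  refine ⟨fun j => S j + T j, fun ξ => ?_⟩
  -- pointwise identity
  have basis_sum : ∑ j : Fin 3, ξ j • EuclideanSpace.single j (1:ℝ) = ξ := by
    have := (EuclideanSpace.basisFun (Fin 3) ℝ).sum_repr ξ
    simpa [EuclideanSpace.basisFun_apply, EuclideanSpace.basisFun_repr] using this
  have hFTC : ∀ j : Fin 3, True := fun _ => trivial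
  -- sum of Hadamard integrals
  have hHsum : ∑ j : Fin 3, (ξ j : ℂ) * H j ξ = G0 ξ := by
    have hcont : ∀ j : Fin 3, Continuous
        (fun t : ℝ => fderiv ℝ G0 (t • ξ) (EuclideanSpace.single j 1)) := by
      intro j
      exact (hFsmooth j).continuous.comp (continuous_id.prodMk continuous_const)
    have step1 : ∀ j : Fin 3, (ξ j : ℂ) * H j ξ =
        ∫ t in (0:ℝ)..1, (ξ j : ℂ) * fderiv ℝ G0 (t • ξ) (EuclideanSpace.single j 1) := by
      intro j
      rw [hH]
      rw [← intervalIntegral.integral_const_mul]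
    rw [Finset.sum_congr rfl fun j _ => step1 j]
    rw [← intervalIntegral.integral_finset_sum]
    swap
    · intro j _
      exact (continuous_const.mul (hcont j)).intervalIntegrable 0 1
    have integrand_eq : ∀ t : ℝ,
        ∑ j : Fin 3, (ξ j : ℂ) * fderiv ℝ G0 (t • ξ) (EuclideanSpace.single j 1)
          = fderiv ℝ G0 (t • ξ) ξ := by
      intro t
      have : ∀ j : Fin 3, (ξ j : ℂ) * fderiv ℝ G0 (t • ξ) (EuclideanSpace.single j 1)
          = fderiv ℝ G0 (t • ξ) (ξ j • EuclideanSpace.single j (1:ℝ)) := by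
        intro j
        rw [ContinuousLinearMap.map_smul, Complex.real_smul]
      rw [Finset.sum_congr rfl fun j _ => this j, ← map_sum, basis_sum]
    rw [intervalIntegral.integral_congr (g := fun t => fderiv ℝ G0 (t • ξ) ξ)
      (fun t _ => integrand_eq t)]
    -- FTC
    have hderiv : ∀ t ∈ Set.uIcc (0:ℝ) 1, HasDerivAt (fun t : ℝ => G0 (t • ξ))
        (fderiv ℝ G0 (t • ξ) ξ) t := by
      intro t _
      have h1 : HasFDerivAt G0 (fderiv ℝ G0 (t • ξ)) (t • ξ) :=
        (hG0smooth.differentiable (by simp) (t • ξ)).hasFDerivAt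
      have h2 : HasDerivAt (fun t : ℝ => t • ξ) ξ t := by
        simpa using (hasDerivAt_id t).smul_const ξ
      exact h1.comp_hasDerivAt t h2
    rw [intervalIntegral.integral_eq_sub_of_hasDerivAt hderiv]
    · simp [hG00]
    · have : Continuous fun t : ℝ => fderiv ℝ G0 (t • ξ) ξ := by
        have := hDsmooth.continuous
        fun_prop
      exact this.intervalIntegrable 0 1
  -- cutoff absorbs
  have hcut : ((ψb ξ : ℝ) : ℂ) * G0 ξ = G0 ξ := by
    by_cases h : ‖ξ‖ ≤ 2
    · have : ψb ξ = 1 := ψb.one_of_mem_closedBall (by simpa [dist_zero_right] using h)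
      rw [this]; norm_num
    · rw [hG0z ξ (by linarith [not_le.mp h])]; ring
  have hSsum : ∑ j : Fin 3, (ξ j : ℂ) * S j ξ = G0 ξ := by
    have : ∀ j : Fin 3, (ξ j : ℂ) * S j ξ =
        ((ψb ξ : ℝ) : ℂ) * ((ξ j : ℂ) * H j ξ) := by
      intro j
      simp only [hS, schwartzOfCompactSupport_apply]
      ring
    rw [Finset.sum_congr rfl fun j _ => this j, ← Finset.mul_sum, hHsum, hcut]
  -- final algebra
  calc g ξ = G0 ξ + ((ξ 0 * ξ 0 + (ξ 1 * ξ 1 + ξ 2 * ξ 2)) * (M ξ)⁻¹ : ℝ) * g ξ := by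
        rw [hG0def]
        have : ((φb ξ * (M ξ)⁻¹ : ℝ) : ℂ) + (((ξ 0 * ξ 0 + (ξ 1 * ξ 1 + ξ 2 * ξ 2)) * (M ξ)⁻¹ : ℝ) : ℂ)
            = 1 := by
          have : (φb ξ * (M ξ)⁻¹ : ℝ) + ((ξ 0 * ξ 0 + (ξ 1 * ξ 1 + ξ 2 * ξ 2)) * (M ξ)⁻¹ : ℝ)
              = 1 := by
            rw [← add_mul]
            exact mul_inv_cancel₀ (hMne ξ)
          exact_mod_cast this
        calc g ξ = (((φb ξ * (M ξ)⁻¹ : ℝ) : ℂ) +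
              (((ξ 0 * ξ 0 + (ξ 1 * ξ 1 + ξ 2 * ξ 2)) * (M ξ)⁻¹ : ℝ) : ℂ)) * g ξ := by
              rw [this, one_mul]
          _ = _ := by ring
    _ = ∑ j : Fin 3, (ξ j : ℂ) * (S j + T j) ξ := by
        have expand : ∀ j : Fin 3, (ξ j : ℂ) * (S j + T j) ξ =
            (ξ j : ℂ) * S j ξ + (ξ j : ℂ) * T j ξ := by
          intro j
          rw [SchwartzMap.add_apply]
          ring
        rw [Finset.sum_congr rfl fun j _ => expand j, Finset.sum_add_distrib, hSsum]
        congr 1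
        simp only [hTapp]
        rw [Fin.sum_univ_three]
        push_cast
        ring

end Decomp
open SchwartzMap MeasureTheory Metric Real Complex
open scoped FourierTransform RealInnerProductSpace

noncomputable section Final

local notation "E3" => EuclideanSpace ℝ (Fin 3)

lemma fourier_pderiv (h : SchwartzMap E3 ℂ) (j : Fin 3) (ξ : E3) :
    fourierTransformCLM ℂ (LineDeriv.lineDerivOpCLM ℝ (SchwartzMap E3 ℂ) (V := E3) (EuclideanSpace.single j 1) h) ξ
      = (2 * π * Complex.I) * (ξ j : ℂ) * (fourierTransformCLM ℂ h ξ) := by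
  rw [fourierTransformCLM_apply, fourierTransformCLM_apply, LineDeriv.lineDerivOpCLM_apply,
    SchwartzMap.fourier_lineDerivOp_eq]
  have htg : (fun x : E3 => inner ℝ x (EuclideanSpace.single j (1:ℝ))).HasTemperateGrowth := by
    fun_prop
  rw [SchwartzMap.smul_apply, SchwartzMap.smulLeftCLM_apply_apply htg]
  simp [EuclideanSpace.inner_single_right]
  ring
  /-
  have hint : Integrable (fderiv ℝ (⇑h)) volume := by
    have : fderiv ℝ (⇑h) = ⇑(fderivCLM ℝ h) := by
      funext x; exact (fderivCLM_apply ℝ h x).symm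
    rw [this]
    exact (fderivCLM ℝ h).integrable
  have step1 : fourierTransformCLM ℂ (LineDeriv.lineDerivOpCLM ℝ (SchwartzMap E3 ℂ) (V := E3) (EuclideanSpace.single j 1) h) ξ
      = 𝓕 (fun x => fderiv ℝ (⇑h) x (EuclideanSpace.single j 1)) ξ := rfl
  rw [step1, ← Real.fourierIntegral_continuousLinearMap_apply hint,
    Real.fourierIntegral_fderiv h.integrable h.differentiable hint]
  rw [VectorFourier.fourierSMulRight_apply]
  simp only [ContinuousLinearMap.neg_apply, innerSL_apply, fourierTransformCLM_apply]
  rw [real_inner_comm, EuclideanSpace.inner_single_left]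
  simp only [starRingEnd_apply, star_trivial, one_mul, smul_eq_mul, Complex.real_smul]
  push_cast
  ring
  -/

theorem schwartz_divergence_solvable'
    (u : SchwartzMap E3 ℂ)
    (hu : ∫ x : E3, u x = 0) :
    ∃ ω : Fin 3 → SchwartzMap E3 ℂ,
      ∀ x : E3,
        u x = -∑ j : Fin 3, fderiv ℝ (ω j) x (EuclideanSpace.single j 1) := by
  set g : SchwartzMap E3 ℂ := FourierTransform.fourierCLE ℂ (SchwartzMap E3 ℂ) u with hg
  have hg0 : g 0 = 0 := by
    have h1 : g 0 = 𝓕 (⇑u) 0 := by rw [hg]; rfl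
    rw [h1, Real.fourier_eq]
    simpa using hu
  obtain ⟨G, hG⟩ := schwartz_decomp g hg0
  set c : ℂ := -((2 * π * Complex.I)⁻¹) with hc
  set ω : Fin 3 → SchwartzMap E3 ℂ :=
    fun j => (FourierTransform.fourierCLE ℂ (SchwartzMap E3 ℂ)).symm (c • G j) with hω
  have hftω : ∀ j, fourierTransformCLM ℂ (ω j) = c • G j := by
    intro j
    have e : fourierTransformCLM ℂ (ω j) = FourierTransform.fourierCLE ℂ (SchwartzMap E3 ℂ) (ω j) := rfl
    rw [e, hω]
    exact (FourierTransform.fourierCLE ℂ (SchwartzMap E3 ℂ)).apply_symm_apply _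
  set w : SchwartzMap E3 ℂ := -∑ j : Fin 3, LineDeriv.lineDerivOpCLM ℝ (SchwartzMap E3 ℂ) (V := E3) (EuclideanSpace.single j 1) (ω j)
    with hw
  have hwu : w = u := by
    apply (FourierTransform.fourierCLE ℂ (SchwartzMap E3 ℂ)).injective
    apply SchwartzMap.ext
    intro ξ
    have e2 : ⇑(∑ j : Fin 3, fourierTransformCLM ℂ
        (LineDeriv.lineDerivOpCLM ℝ (SchwartzMap E3 ℂ) (V := E3) (EuclideanSpace.single j 1) (ω j))) =
        ∑ j : Fin 3, ⇑(fourierTransformCLM ℂ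
          (LineDeriv.lineDerivOpCLM ℝ (SchwartzMap E3 ℂ) (V := E3) (EuclideanSpace.single j 1) (ω j))) :=
      by rw [← SchwartzMap.coe_coeHom]
         exact map_sum (SchwartzMap.coeHom (SchwartzMap E3 ℂ) E3 ℂ) _ _
    have lhs : FourierTransform.fourierCLE ℂ (SchwartzMap E3 ℂ) w ξ =
        -∑ j : Fin 3, fourierTransformCLM ℂ (LineDeriv.lineDerivOpCLM ℝ (SchwartzMap E3 ℂ) (V := E3) (EuclideanSpace.single j 1) (ω j)) ξ := by
      calc FourierTransform.fourierCLE ℂ (SchwartzMap E3 ℂ) w ξ = (fourierTransformCLM ℂ w) ξ := rfl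
        _ = (-(∑ j : Fin 3, fourierTransformCLM ℂ
              (LineDeriv.lineDerivOpCLM ℝ (SchwartzMap E3 ℂ) (V := E3) (EuclideanSpace.single j 1) (ω j))) : SchwartzMap E3 ℂ) ξ := by
            rw [hw, map_neg, map_sum]
        _ = -((∑ j : Fin 3, fourierTransformCLM ℂ
              (LineDeriv.lineDerivOpCLM ℝ (SchwartzMap E3 ℂ) (V := E3) (EuclideanSpace.single j 1) (ω j)) : SchwartzMap E3 ℂ) ξ) := rfl
        _ = _ := by rw [show ((∑ j : Fin 3, fourierTransformCLM ℂ
              (LineDeriv.lineDerivOpCLM ℝ (SchwartzMap E3 ℂ) (V := E3) (EuclideanSpace.single j 1) (ω j)) : SchwartzMap E3 ℂ)) ξ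
                = (⇑(∑ j : Fin 3, fourierTransformCLM ℂ
                  (LineDeriv.lineDerivOpCLM ℝ (SchwartzMap E3 ℂ) (V := E3) (EuclideanSpace.single j 1) (ω j)))) ξ from rfl,
              e2, Finset.sum_apply]
    rw [lhs]
    have term : ∀ j : Fin 3,
        fourierTransformCLM ℂ (LineDeriv.lineDerivOpCLM ℝ (SchwartzMap E3 ℂ) (V := E3) (EuclideanSpace.single j 1) (ω j)) ξ
          = -((ξ j : ℂ) * G j ξ) := by
      intro j
      rw [fourier_pderiv, hftω j]
      have e : (c • G j) ξ = c * G j ξ := rfl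
      rw [e, hc]
      have h2πI : (2 * (π:ℂ) * Complex.I) ≠ 0 := by
        simp [Real.pi_ne_zero, Complex.I_ne_zero]
      field_simp
    rw [Finset.sum_congr rfl fun j _ => term j, Finset.sum_neg_distrib, neg_neg, ← hG ξ]
  refine ⟨ω, fun x => ?_⟩
  conv_lhs => rw [← hwu]
  have e2 : ⇑(∑ j : Fin 3, LineDeriv.lineDerivOpCLM ℝ (SchwartzMap E3 ℂ) (V := E3) (EuclideanSpace.single j 1) (ω j)) =
      ∑ j : Fin 3, ⇑(LineDeriv.lineDerivOpCLM ℝ (SchwartzMap E3 ℂ) (V := E3) (EuclideanSpace.single j 1) (ω j)) :=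
    by rw [← SchwartzMap.coe_coeHom]
       exact map_sum (SchwartzMap.coeHom (SchwartzMap E3 ℂ) E3 ℂ) _ _
  have e4 : (∑ j : Fin 3, LineDeriv.lineDerivOpCLM ℝ (SchwartzMap E3 ℂ) (V := E3) (EuclideanSpace.single j 1) (ω j) : SchwartzMap E3 ℂ) x
      = ∑ j : Fin 3, fderiv ℝ (ω j) x (EuclideanSpace.single j 1) := by
    rw [show ((∑ j : Fin 3, LineDeriv.lineDerivOpCLM ℝ (SchwartzMap E3 ℂ) (V := E3) (EuclideanSpace.single j 1) (ω j) : SchwartzMap E3 ℂ)) x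
        = (⇑(∑ j : Fin 3, LineDeriv.lineDerivOpCLM ℝ (SchwartzMap E3 ℂ) (V := E3) (EuclideanSpace.single j 1) (ω j))) x from rfl,
      e2, Finset.sum_apply]
    exact Finset.sum_congr rfl fun j _ => SchwartzMap.lineDerivOp_apply_eq_fderiv _ (ω j) x
  calc w x = -((∑ j : Fin 3, LineDeriv.lineDerivOpCLM ℝ (SchwartzMap E3 ℂ) (V := E3) (EuclideanSpace.single j 1) (ω j) :
        SchwartzMap E3 ℂ) x) := rfl
    _ = -∑ j : Fin 3, fderiv ℝ (ω j) x (EuclideanSpace.single j 1) := by rw [e4]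

end Final

open SchwartzMap

/-- If `u` is a Schwartz function on `ℝ³` with `∫ u = 0`, then the divergence
equation `δω = u`, with `(δω) = -∑_j ∂_j ω_j`, has a solution with Schwartz components. -/
theorem schwartz_divergence_solvable
    (u : SchwartzMap (EuclideanSpace ℝ (Fin 3)) ℂ)
    (hu : ∫ x : EuclideanSpace ℝ (Fin 3), u x = 0) :
    ∃ ω : Fin 3 → SchwartzMap (EuclideanSpace ℝ (Fin 3)) ℂ,
      ∀ x : EuclideanSpace ℝ (Fin 3),
        u x = -∑ j : Fin 3, fderiv ℝ (ω j) x (EuclideanSpace.single j 1) :=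
  schwartz_divergence_solvable' u hu
end
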